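/- Suppose there is κ > 0 such that for all coprime positive integers a, b, c with a + b = c, (log(c/a))/log₂*(c) ≤ exp(κ · (log₃* rad(bc) / log₂* rad(bc)) · log rad(bc)). Then for all coprime positive integers a, b, c with a + b = c and τ > 0 satisfying a ≤ c / exp((log c)^τ · log₂*(c)), one has log c ≤ exp(τ⁻¹ κ · (log₃* rad(bc) / log₂* rad(bc)) · log rad(bc)). -/

import Mathlib

/-- The radical of a natural number: product of its distinct prime divisors. -/
def rad (n : ℕ) : ℕ := ∏ p ∈ n.primeFactors, p

/-- `log₂*(t) = max(1, log log t)`. -/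
noncomputable def log2star (t : ℝ) : ℝ := max 1 (Real.log (Real.log t))

/-- `log₃*(t) = max(1, log log log t)`. -/
noncomputable def log3star (t : ℝ) : ℝ := max 1 (Real.log (Real.log (Real.log t)))

/-! The hypothesis `a ≤ c / exp ((log c)^τ · log₂* c)` says exactly that `(log c)^τ` is at most
`log (c/a) / log₂* c`, which the assumed abc-type bound controls by `exp X`; taking `τ`-th roots
gives `log c ≤ exp (X / τ)`. -/

theorem le_log_div_div_of_le_div_exp {a c y M : ℝ} (ha : 0 < a) (hM : 0 < M)
    (h : a ≤ c / Real.exp (y * M)) : y ≤ Real.log (c / a) / M := by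
  have hexp : Real.exp (y * M) ≤ c / a := by
    rw [le_div_iff₀ ha, mul_comm]
    rwa [le_div_iff₀ (Real.exp_pos _)] at h
  rw [le_div_iff₀ hM]
  exact (Real.le_log_iff_exp_le ((Real.exp_pos _).trans_le hexp)).mpr hexp

theorem le_exp_inv_mul_of_rpow_le_exp {x τ X : ℝ} (hx : 0 ≤ x) (hτ : 0 < τ)
    (h : x ^ τ ≤ Real.exp X) : x ≤ Real.exp (τ⁻¹ * X) :=
  calc x = (x ^ τ) ^ τ⁻¹ := (Real.rpow_rpow_inv hx hτ.ne').symm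
    _ ≤ Real.exp X ^ τ⁻¹ := Real.rpow_le_rpow (Real.rpow_nonneg hx τ) h (inv_nonneg.mpr hτ.le)
    _ = Real.exp (τ⁻¹ * X) := by rw [← Real.exp_mul, mul_comm]

theorem stmt_7_general (κ : ℝ)
    (habc : ∀ a b c : ℕ, 0 < a → 0 < b → Nat.Coprime a b → a + b = c →
      Real.log ((c : ℝ) / a) / log2star c ≤
        Real.exp (κ * (log3star (rad (b * c)) / log2star (rad (b * c))) *
          Real.log (rad (b * c)))) :
    ∀ a b c : ℕ, 0 < a → 0 < b → Nat.Coprime a b → a + b = c →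
      ∀ τ : ℝ, 0 < τ →
      (a : ℝ) ≤ (c : ℝ) / Real.exp ((Real.log c) ^ τ * log2star c) →
      Real.log c ≤
        Real.exp (τ⁻¹ * κ * (log3star (rad (b * c)) / log2star (rad (b * c))) *
          Real.log (rad (b * c))) := by
  intro a b c ha hb hcop hsum τ hτ hale
  have hlogc : 0 ≤ Real.log c := Real.log_natCast_nonneg c
  have hlog2 : (0 : ℝ) < log2star c := one_pos.trans_le (le_max_left _ _)
  have hpow := (le_log_div_div_of_le_div_exp (Nat.cast_pos.mpr ha) hlog2 hale).trans
    (habc a b c ha hb hcop hsum)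
  simpa only [mul_assoc] using le_exp_inv_mul_of_rpow_le_exp hlogc hτ hpow

theorem stmt_7 (κ : ℝ) (hκ : 0 < κ)
    (habc : ∀ a b c : ℕ, 0 < a → 0 < b → Nat.Coprime a b → a + b = c →
      Real.log ((c : ℝ) / a) / log2star c ≤
        Real.exp (κ * (log3star (rad (b * c)) / log2star (rad (b * c))) *
          Real.log (rad (b * c)))) :
    ∀ a b c : ℕ, 0 < a → 0 < b → Nat.Coprime a b → a + b = c →
      ∀ τ : ℝ, 0 < τ →
      (a : ℝ) ≤ (c : ℝ) / Real.exp ((Real.log c) ^ τ * log2star c) →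
      Real.log c ≤
        Real.exp (τ⁻¹ * κ * (log3star (rad (b * c)) / log2star (rad (b * c))) *
          Real.log (rad (b * c))) :=
  stmt_7_general κ habc
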